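/- Supertranslation invariance of the total Bondi energy flux (the paper's conclusion in §4.2): Let n : ℝ × S² → ℝ be measurable with 0 ≤ n(u,x) ≤ C·(1+|u|)^{−2−2ε} for all (u,x), for some constants C ≥ 0 and ε > 0, let f : S² → ℝ be a bounded measurable function, and define the supertranslated squared news n̄(ū,x) = n(ū + f(x), x). Suppose E, Ē : ℝ → ℝ are differentiable with E′(u) = −(1/32π)∫_{S²} n(u,x) dσ(x) and Ē′(ū) = −(1/32π)∫_{S²} n̄(ū,x) dσ(x) for all u, ū. Then the limits of E and Ē at ±∞ exist and the total fluxes agree: lim_{ū→+∞} Ē(ū) − lim_{ū→−∞} Ē(ū) = lim_{u→+∞} E(u) − lim_{u→−∞} E(u). -/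
import Mathlib


open MeasureTheory Real Filter

/-- The unit sphere `S²` in `ℝ³`. -/
noncomputable abbrev S2 : Set (EuclideanSpace ℝ (Fin 3)) :=
  Metric.sphere (0 : EuclideanSpace ℝ (Fin 3)) 1

/-- The standard surface measure on `S²` (of total mass `4π`). -/
noncomputable def sphereMeasure : Measure S2 :=
  (volume : Measure (EuclideanSpace ℝ (Fin 3))).toSphere

instance : IsFiniteMeasure sphereMeasure := by
  unfold sphereMeasure; infer_instance

/-- If `E` has everywhere a derivative `D` that is integrable over `ℝ`, then `E` has
limits at `±∞` whose difference is the integral of `D`. -/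
lemma flux_limits {E D : ℝ → ℝ} (hD : Integrable D)
    (hE : ∀ u, HasDerivAt E (D u) u) :
    ∃ Lp Lm : ℝ, Tendsto E atTop (nhds Lp) ∧ Tendsto E atBot (nhds Lm) ∧
      Lp - Lm = ∫ u, D u := by
  have key : ∀ a b : ℝ, (∫ u in a..b, D u) = E b - E a := fun a b =>
    intervalIntegral.integral_eq_sub_of_hasDerivAt (fun x _ => hE x)
      hD.intervalIntegrable
  refine ⟨E 0 + ∫ u in Set.Ioi (0:ℝ), D u, E 0 - ∫ u in Set.Iic (0:ℝ), D u, ?_, ?_, ?_⟩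
  · have h := intervalIntegral_tendsto_integral_Ioi 0 hD.integrableOn tendsto_id
    have h2 : Tendsto (fun b => E 0 + ∫ u in (0:ℝ)..b, D u) atTop
        (nhds (E 0 + ∫ u in Set.Ioi (0:ℝ), D u)) := tendsto_const_nhds.add h
    have heq : (fun b => E 0 + ∫ u in (0:ℝ)..b, D u) = E := funext fun b => by
      rw [key]; ring
    rwa [heq] at h2
  · have h := intervalIntegral_tendsto_integral_Iic 0 hD.integrableOn tendsto_id
    have h2 : Tendsto (fun a => E 0 - ∫ u in a..(0:ℝ), D u) atBot
        (nhds (E 0 - ∫ u in Set.Iic (0:ℝ), D u)) := tendsto_const_nhds.sub h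
    have heq : (fun a => E 0 - ∫ u in a..(0:ℝ), D u) = E := funext fun a => by
      rw [key]; ring
    rwa [heq] at h2
  · rw [← intervalIntegral.integral_Iic_add_Ioi hD.integrableOn hD.integrableOn]; ring

/-- **Supertranslation invariance of the total Bondi energy flux.** If `n` satisfies
the news decay bound, `n̄(ū,x) = n(ū + f(x), x)` is its supertranslation by a bounded
measurable `f`, and `E`, `Ē` satisfy the Bondi mass loss formula with respect to `n`
and `n̄`, then the limits of `E` and `Ē` at `±∞` exist and their total fluxes agree. -/
theorem supertranslation_invariance_bondi_energy_flux
    (n : ℝ × S2 → ℝ) (hn_meas : Measurable n)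
    (C ε : ℝ) (hC : 0 ≤ C) (hε : 0 < ε)
    (hn_bound : ∀ p : ℝ × S2, 0 ≤ n p ∧ n p ≤ C * (1 + |p.1|) ^ (-2 - 2 * ε))
    (f : S2 → ℝ) (hf_meas : Measurable f) (hf_bdd : ∃ M : ℝ, ∀ x, |f x| ≤ M)
    (E Ebar : ℝ → ℝ)
    (hE : ∀ u : ℝ,
      HasDerivAt E (-(1 / (32 * π)) * ∫ x, n (u, x) ∂sphereMeasure) u)
    (hEbar : ∀ ubar : ℝ,
      HasDerivAt Ebar
        (-(1 / (32 * π)) * ∫ x, n (ubar + f x, x) ∂sphereMeasure) ubar) :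
    ∃ Lp Lm Lpbar Lmbar : ℝ,
      Tendsto E atTop (nhds Lp) ∧ Tendsto E atBot (nhds Lm) ∧
      Tendsto Ebar atTop (nhds Lpbar) ∧ Tendsto Ebar atBot (nhds Lmbar) ∧
      Lpbar - Lmbar = Lp - Lm := by
  obtain ⟨M0, hM0⟩ := hf_bdd
  set M : ℝ := max M0 0 with hMdef
  have hM0' : (0:ℝ) ≤ M := le_max_right _ _
  have hfM : ∀ x, |f x| ≤ M := fun x => (hM0 x).trans (le_max_left _ _)
  -- integrability of the decay profile
  have hφ : Integrable (fun u : ℝ => (1 + |u|) ^ (-2 - 2 * ε)) := by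
    have hlt : (Module.finrank ℝ ℝ : ℝ) < 2 + 2 * ε := by
      rw [Module.finrank_self]; push_cast; linarith
    have h := integrable_one_add_norm (E := ℝ) (μ := volume) (r := 2 + 2 * ε) hlt
    have : (fun x : ℝ => (1 + ‖x‖) ^ (-(2 + 2 * ε))) =
        fun u : ℝ => (1 + |u|) ^ (-2 - 2 * ε) := by
      funext u; rw [Real.norm_eq_abs]; ring_nf
    rwa [this] at h
  -- integrability of `n` on the product space
  have hn_int : Integrable n (volume.prod sphereMeasure) := by
    have hb : Integrable (fun p : ℝ × S2 => (C * (1 + |p.1|) ^ (-2 - 2 * ε)) * 1)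
        (volume.prod sphereMeasure) := (hφ.const_mul C).mul_prod (integrable_const (1:ℝ))
    simp only [mul_one] at hb
    refine hb.mono' hn_meas.aestronglyMeasurable ?_
    filter_upwards with p
    rw [Real.norm_eq_abs, abs_of_nonneg (hn_bound p).1]
    exact (hn_bound p).2
  -- the supertranslated news
  set nbar : ℝ × S2 → ℝ := fun p => n (p.1 + f p.2, p.2) with hnbar_def
  have hnbar_meas : Measurable nbar :=
    hn_meas.comp ((measurable_fst.add (hf_meas.comp measurable_snd)).prodMk measurable_snd)
  -- key pointwise bound for the supertranslated news
  have hkey : ∀ p : ℝ × S2, (1 + |p.1 + f p.2|) ^ (-2 - 2 * ε) ≤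
      (1 + M) ^ (2 + 2 * ε) * (1 + |p.1|) ^ (-2 - 2 * ε) := by
    intro p
    set a : ℝ := 1 + |p.1 + f p.2| with ha_def
    set b : ℝ := 1 + |p.1| with hb_def
    have ha : (0:ℝ) < a := by positivity
    have hb : (0:ℝ) < b := by positivity
    have hz : (-2 - 2 * ε : ℝ) ≤ 0 := by linarith
    have hba : b ≤ (1 + M) * a := by
      have h1 : |p.1| ≤ |p.1 + f p.2| + M := by
        have h := abs_add_le (p.1 + f p.2) (-(f p.2))
        simp only [add_neg_cancel_right, abs_neg] at h
        linarith [hfM p.2]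
      nlinarith [hfM p.2, abs_nonneg (p.1 + f p.2), abs_nonneg p.1]
    have h2 : ((1 + M) * a) ^ (-2 - 2 * ε) ≤ b ^ (-2 - 2 * ε) :=
      Real.rpow_le_rpow_of_nonpos hb hba hz
    rw [Real.mul_rpow (by linarith) ha.le] at h2
    have h3 : (0:ℝ) < (1 + M) ^ (-2 - 2 * ε) := Real.rpow_pos_of_pos (by linarith) _
    have h4 : a ^ (-2 - 2 * ε) ≤ ((1 + M) ^ (-2 - 2 * ε))⁻¹ * b ^ (-2 - 2 * ε) := by
      rw [le_inv_mul_iff₀ h3]; linarith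
    have h5 : ((1 + M) ^ (-2 - 2 * ε) : ℝ)⁻¹ = (1 + M) ^ (2 + 2 * ε) := by
      rw [← Real.rpow_neg (by linarith)]; ring_nf
    rwa [h5] at h4
  -- integrability of `nbar` on the product space
  have hnbar_int : Integrable nbar (volume.prod sphereMeasure) := by
    have hb : Integrable
        (fun p : ℝ × S2 => ((C * (1 + M) ^ (2 + 2 * ε)) * (1 + |p.1|) ^ (-2 - 2 * ε)) * 1)
        (volume.prod sphereMeasure) :=
      (hφ.const_mul _).mul_prod (integrable_const (1:ℝ))
    simp only [mul_one] at hb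
    refine hb.mono' hnbar_meas.aestronglyMeasurable ?_
    filter_upwards with p
    rw [Real.norm_eq_abs, abs_of_nonneg (hn_bound _).1]
    calc nbar p ≤ C * (1 + |p.1 + f p.2|) ^ (-2 - 2 * ε) := (hn_bound _).2
      _ ≤ C * ((1 + M) ^ (2 + 2 * ε) * (1 + |p.1|) ^ (-2 - 2 * ε)) :=
        mul_le_mul_of_nonneg_left (hkey p) hC
      _ = (C * (1 + M) ^ (2 + 2 * ε)) * (1 + |p.1|) ^ (-2 - 2 * ε) := by ring
  -- marginal integrability
  have hg_int : Integrable (fun u => ∫ x, n (u, x) ∂sphereMeasure) volume :=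
    hn_int.integral_prod_left
  have hgbar_int : Integrable (fun u => ∫ x, n (u + f x, x) ∂sphereMeasure) volume :=
    hnbar_int.integral_prod_left
  -- apply the limit lemma
  obtain ⟨Lp, Lm, hLp, hLm, hflux⟩ :=
    flux_limits (hg_int.const_mul (-(1 / (32 * π)))) hE
  obtain ⟨Lpbar, Lmbar, hLpbar, hLmbar, hfluxbar⟩ :=
    flux_limits (hgbar_int.const_mul (-(1 / (32 * π)))) hEbar
  refine ⟨Lp, Lm, Lpbar, Lmbar, hLp, hLm, hLpbar, hLmbar, ?_⟩
  rw [hflux, hfluxbar, integral_const_mul, integral_const_mul]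
  congr 1
  -- the total news fluxes agree, by Fubini and translation invariance
  calc ∫ u, ∫ x, n (u + f x, x) ∂sphereMeasure
      = ∫ x, ∫ u, n (u + f x, x) ∂volume ∂sphereMeasure := integral_integral_swap hnbar_int
    _ = ∫ x, ∫ u, n (u, x) ∂volume ∂sphereMeasure := by
        congr 1; funext x
        exact integral_add_right_eq_self (fun u => n (u, x)) (f x)
    _ = ∫ u, ∫ x, n (u, x) ∂sphereMeasure := (integral_integral_swap (f := fun u x => n (u, x)) hn_int).symm
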